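/- Let (A, ⟨·,·⟩) be a graded vector space with a graded-symmetric nondegenerate pairing, equipped with multilinear maps m^k_β satisfying the cyclic symmetry ⟨m^k_β(x₁,…,x_k), x₀⟩ = ±⟨m^k_β(x₀,…,x_{k−1}), x_k⟩ and the divisor axiom: for x of degree 1, Σ_{i=0}^{k} ± m^{k+1}_β(b,…,b,x,b,…,b) = x(∂β)·m^k_β(b,…,b). If x(∂β) = 0 and all inputs b have even degree (so all signs are +1), then for k ≥ 1, ⟨m^k_β(b,…,b), x⟩ = 0. -/
import Mathlib


open Finset

/-- Abstract form of the `β ≠ 0, k > 0` case of the zero-pairing lemma: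
given operations `m k : Aᵏ → A` on a space with a pairing satisfying the cyclic
symmetry and the divisor axiom (with trivial signs, as all inputs have even
degree), and a degree-one element `x` with `x(∂β) = 0`, the pairing
`⟨m k (b,…,b), x⟩` vanishes for all `k ≥ 1`. -/
theorem zero_pairing_of_cyclic_divisor
    (A : Type*) [AddCommGroup A] [Module ℝ A]
    (pair : A →ₗ[ℝ] A →ₗ[ℝ] ℝ)
    (hnondeg : ∀ a : A, (∀ a' : A, pair a a' = 0) → a = 0)
    (hsymm : ∀ a a' : A, pair a a' = pair a' a)
    (m : (k : ℕ) → (Fin k → A) → A)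
    (b x : A) (c : ℝ)
    -- cyclic symmetry: ⟨m k (v₁,…,v_k), v₀⟩ = ⟨m k (v₀,…,v_{k-1}), v_k⟩
    (hcyc : ∀ (k : ℕ) (v : Fin (k + 1) → A),
      pair (m k (fun i : Fin k => v i.succ)) (v 0) =
        pair (m k (fun i : Fin k => v i.castSucc)) (v (Fin.last k)))
    -- divisor axiom: Σᵢ m (k+1) (b,…,b,x,b,…,b) = x(∂β) • m k (b,…,b)
    (hdiv : ∀ k : ℕ,
      (∑ i : Fin (k + 1), m (k + 1) (fun j => if j = i then x else b)) =
        c • m k (fun _ => b))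
    -- x(∂β) = 0
    (hc : c = 0) :
    ∀ k : ℕ, 1 ≤ k → pair (m k (fun _ => b)) x = 0 := by
  intro k hk
  obtain ⟨n, rfl⟩ : ∃ n, k = n + 1 := ⟨k - 1, by omega⟩
  set Q : ℝ := pair (m (n + 1) (fun _ => b)) x with hQ
  set P : ℕ → ℝ := fun t =>
    pair (m (n + 1) (fun j : Fin (n + 1) => if j.val = t then x else b)) b with hP
  have hlast : P n = Q := by
    have h := hcyc (n + 1) (fun j : Fin (n + 2) => if j.val = n + 1 then x else b)
    have e1 : (fun i : Fin (n + 1) => if ((i.succ : Fin (n + 2)) : ℕ) = n + 1 then x else b)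
        = (fun j : Fin (n + 1) => if (j : ℕ) = n then x else b) := by
      funext i; have := i.isLt
      by_cases hi : (i : ℕ) = n <;> simp [Fin.val_succ, hi] <;> omega
    have e2 : (fun i : Fin (n + 1) => if ((i.castSucc : Fin (n + 2)) : ℕ) = n + 1 then x else b)
        = (fun _ : Fin (n + 1) => b) := by
      funext i; have := i.isLt
      simp [Fin.coe_castSucc]; omega
    rw [e1, e2] at h
    simpa using h
  have hstep : ∀ t, t < n → P t = P (t + 1) := by
    intro t ht
    have h := hcyc (n + 1) (fun j : Fin (n + 2) => if j.val = t + 1 then x else b)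
    have e1 : (fun i : Fin (n + 1) => if ((i.succ : Fin (n + 2)) : ℕ) = t + 1 then x else b)
        = (fun j : Fin (n + 1) => if (j : ℕ) = t then x else b) := by
      funext i; simp [Fin.val_succ]
    have e2 : (fun i : Fin (n + 1) => if ((i.castSucc : Fin (n + 2)) : ℕ) = t + 1 then x else b)
        = (fun j : Fin (n + 1) => if (j : ℕ) = t + 1 then x else b) := by
      funext i; simp [Fin.coe_castSucc]
    rw [e1, e2] at h
    have hv0 : (if ((0 : Fin (n + 2)) : ℕ) = t + 1 then x else b) = b := by simp
    have hvl : (if ((Fin.last (n + 1) : Fin (n + 2)) : ℕ) = t + 1 then x else b) = b := by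
      simp [Fin.val_last]; omega
    rw [hv0, hvl] at h
    exact h
  have hall : ∀ d, d ≤ n → P (n - d) = Q := by
    intro d
    induction d with
    | zero => intro _; simpa using hlast
    | succ d ih =>
      intro hd
      have h1 : n - (d + 1) < n := by omega
      have h2 : n - (d + 1) + 1 = n - d := by omega
      rw [hstep _ h1, h2]
      exact ih (by omega)
  have hsum := congrArg (fun a => pair a b) (hdiv n)
  simp only [hc, zero_smul, map_sum, map_zero, LinearMap.sum_apply, LinearMap.zero_apply] at hsum
  have hterm : ∀ i : Fin (n + 1),
      pair (m (n + 1) (fun j => if j = i then x else b)) b = Q := by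
    intro i
    have e : (fun j : Fin (n + 1) => if j = i then x else b)
        = (fun j : Fin (n + 1) => if (j : ℕ) = (i : ℕ) then x else b) := by
      funext j; simp [Fin.ext_iff]
    rw [e]
    have : (i : ℕ) = n - (n - (i : ℕ)) := by omega
    rw [this]
    exact hall _ (by omega)
  rw [Finset.sum_congr rfl (fun i _ => hterm i)] at hsum
  simp only [Finset.sum_const, card_univ, Fintype.card_fin, nsmul_eq_mul] at hsum
  have : Q = 0 := by
    rcases mul_eq_zero.mp hsum with h | h
    · exact absurd h (by positivity)
    · exact h
  simpa [hQ] using this
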